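/- arXiv:1410.2690 — 5 statements merged into one kernel-verified Lean document; each statement's English description precedes it below -/
import Mathlib

section
/- Let V be a real inner product space, ξ ∈ V a unit vector, and set η(x) = ⟨x, ξ⟩. Let A : V → V be a self-adjoint linear map with Aξ = α·ξ for some α ∈ ℝ, and let φ : V → V be a skew-adjoint linear map with φξ = 0 and φ(φx) = −x + η(x)·ξ for all x ∈ V. Suppose σ, h, ϱ ∈ ℝ with σ ≠ 0 satisfy, for every x ∈ V: σ·Ax + h·φ(Ax) − h·A(φx) + ϱ·η(x)·ξ − φ(A(Ax)) + A(A(φx)) = 0. Then φ∘A + A∘φ = 0, i.e. φ(Ax) + A(φx) = 0 for all x ∈ V. -/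
open scoped RealInnerProductSpace

/-- Algebraic core of equation (4.10): the GTW-Reeb parallel identity forces
the anticommutation `φ∘A + A∘φ = 0`. -/
theorem phi_A_anticommute
    {V : Type*} [NormedAddCommGroup V] [InnerProductSpace ℝ V]
    (ξ : V) (hξ : ‖ξ‖ = 1)
    (A : V →ₗ[ℝ] V) (hA : ∀ y z : V, ⟪A y, z⟫ = ⟪y, A z⟫)
    (α : ℝ) (hAξ : A ξ = α • ξ)
    (φ : V →ₗ[ℝ] V) (hφ : ∀ y z : V, ⟪φ y, z⟫ = -⟪y, φ z⟫)
    (hφξ : φ ξ = 0) (hφφ : ∀ x : V, φ (φ x) = -x + ⟪x, ξ⟫ • ξ)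
    (σ h ϱ : ℝ) (hσ : σ ≠ 0)
    (heq : ∀ x : V,
      σ • A x + h • φ (A x) - h • A (φ x) + (ϱ * ⟪x, ξ⟫) • ξ
        - φ (A (A x)) + A (A (φ x)) = 0) :
    ∀ x : V, φ (A x) + A (φ x) = 0 := by
  intro x
  have hAx_ξ : ∀ y : V, ⟪A y, ξ⟫ = α * ⟪y, ξ⟫ := by
    intro y
    rw [hA y ξ, hAξ, real_inner_smul_right]
  have hφx_ξ : ⟪φ x, ξ⟫ = 0 := by
    rw [hφ, hφξ, inner_zero_right, neg_zero]
  have expand : σ • (φ (A x) + A (φ x))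
      = φ (σ • A x + h • φ (A x) - h • A (φ x) + (ϱ * ⟪x, ξ⟫) • ξ
            - φ (A (A x)) + A (A (φ x)))
        + (σ • A (φ x) + h • φ (A (φ x)) - h • A (φ (φ x))
            + (ϱ * ⟪φ x, ξ⟫) • ξ - φ (A (A (φ x))) + A (A (φ (φ x)))) := by
    simp only [map_add, map_sub, map_smul, map_neg, hφφ, hφξ, hφx_ξ, hAx_ξ,
      hAξ, smul_zero, mul_zero, zero_smul, smul_smul, smul_neg]
    module
  have key : σ • (φ (A x) + A (φ x)) = 0 := by
    rw [expand, heq x, heq (φ x), map_zero, add_zero]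
  exact (smul_eq_zero.mp key).resolve_left hσ
end

section
/- Let V be a real inner product space, ξ ∈ V a unit vector, and set η(x) = ⟨x, ξ⟩. Let A : V → V be a self-adjoint linear map with Aξ = α·ξ for some α ∈ ℝ, and let φ : V → V be a skew-adjoint linear map with φξ = 0 and φ(φx) = −x + η(x)·ξ for all x ∈ V. Suppose σ, h, ϱ ∈ ℝ with σ ≠ 0 satisfy, for every x ∈ V: σ·Ax + h·φ(Ax) − h·A(φx) + ϱ·η(x)·ξ − φ(A(Ax)) + A(A(φx)) = 0. Then Ax = 0 for every x ∈ V with ⟨x, ξ⟩ = 0; equivalently, Ax = α·⟨x, ξ⟩·ξ for all x ∈ V. -/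
open scoped RealInnerProductSpace

/-- Full algebraic conclusion in the case `ξ ∈ Q⊥`, `ξh ≠ 0`: the shape
operator vanishes on the orthogonal complement of `ξ`; equivalently
`A x = α⟨x, ξ⟩ξ` for all `x`. -/
theorem shape_operator_vanishes_on_h
    {V : Type*} [NormedAddCommGroup V] [InnerProductSpace ℝ V]
    (ξ : V) (hξ : ‖ξ‖ = 1)
    (A : V →ₗ[ℝ] V) (hA : ∀ y z : V, ⟪A y, z⟫ = ⟪y, A z⟫)
    (α : ℝ) (hAξ : A ξ = α • ξ)
    (φ : V →ₗ[ℝ] V) (hφ : ∀ y z : V, ⟪φ y, z⟫ = -⟪y, φ z⟫)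
    (hφξ : φ ξ = 0) (hφφ : ∀ x : V, φ (φ x) = -x + ⟪x, ξ⟫ • ξ)
    (σ h ϱ : ℝ) (hσ : σ ≠ 0)
    (heq : ∀ x : V,
      σ • A x + h • φ (A x) - h • A (φ x) + (ϱ * ⟪x, ξ⟫) • ξ
        - φ (A (A x)) + A (A (φ x)) = 0) :
    (∀ x : V, ⟪x, ξ⟫ = 0 → A x = 0) ∧ (∀ x : V, A x = (α * ⟪x, ξ⟫) • ξ) := by
  -- η(A x) = α η(x)
  have hηA : ∀ x : V, ⟪A x, ξ⟫ = α * ⟪x, ξ⟫ := by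
    intro x
    rw [hA, hAξ, real_inner_smul_right]
  -- η(φ x) = 0
  have hηφ : ∀ x : V, ⟪φ x, ξ⟫ = 0 := by
    intro x
    rw [hφ, hφξ, inner_zero_right]
    ring
  -- anticommutation: A φ = - φ A, obtained by applying φ to the identity
  -- at x and adding the identity at φ x.
  have anticomm : ∀ x : V, A (φ x) = - φ (A x) := by
    intro x
    have e1 := congrArg φ (heq x)
    have e2 := heq (φ x)
    simp only [map_add, map_sub, map_smul, map_neg, map_zero, hφξ, smul_zero, hφφ, hηA, hηφ,
      hAξ, mul_zero, zero_smul, add_zero, sub_zero, smul_neg, neg_neg] at e1 e2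
    have h4 : σ • (φ (A x) + A (φ x)) = 0 := by
      linear_combination (norm := module) e1 + e2
    have h5 : φ (A x) + A (φ x) = 0 := by
      rcases smul_eq_zero.mp h4 with hc | hc
      · exact absurd hc hσ
      · exact hc
    exact eq_neg_of_add_eq_zero_right h5
  -- the identity reduces to σ • A x + 2h • φ(A x) + ϱ η(x) ξ = 0
  have reduced : ∀ x : V, σ • A x + (2 * h) • φ (A x) + (ϱ * ⟪x, ξ⟫) • ξ = 0 := by
    intro x
    have e := heq x
    rw [anticomm x, map_neg, anticomm (A x)] at e
    linear_combination (norm := module) e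
  -- main claim: A vanishes on the orthogonal complement of ξ
  have main1 : ∀ x : V, ⟪x, ξ⟫ = 0 → A x = 0 := by
    intro x hx
    have e : σ • A x + (2 * h) • φ (A x) = 0 := by
      have := reduced x
      rw [hx, mul_zero, zero_smul, add_zero] at this
      exact this
    have e' : σ • φ (A x) - (2 * h) • A x = 0 := by
      have e2 := congrArg φ e
      simp only [map_add, map_smul, map_zero, hφφ, hηA, hx, mul_zero, zero_smul,
        add_zero, smul_neg] at e2
      linear_combination (norm := module) e2
    have hz : (σ ^ 2 + (2 * h) ^ 2) • A x = 0 := by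
      linear_combination (norm := module) σ • e - (2 * h) • e'
    rcases smul_eq_zero.mp hz with hc | hc
    · exfalso
      have : σ ^ 2 + (2 * h) ^ 2 > 0 := by positivity
      linarith
    · exact hc
  refine ⟨main1, fun x => ?_⟩
  have hx : ⟪x - ⟪x, ξ⟫ • ξ, ξ⟫ = 0 := by
    have hξξ : ⟪ξ, ξ⟫ = 1 := by
      rw [real_inner_self_eq_norm_mul_norm, hξ]; ring
    rw [inner_sub_left, real_inner_smul_left, hξξ]
    ring
  have h0 := main1 _ hx
  rw [map_sub, map_smul, hAξ, sub_eq_zero] at h0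
  rw [h0]
  module
end

section
/- Let n ≥ 2 be an integer and r a real number with 0 < r < π/4. Put α = −2·tan(2r), k = α/2, β = 2·cot(2r) and h = α + (4n−1)β. Then the two conditions 4 − h·β + β² = 0 and 4k + (h − β)(4 + k·β) = 0 both hold if and only if tan(2r) = √(2n−1). -/
/-! With `t = tan (2r) > 0` we have `α = -2t`, `k = -t`, `β = 2/t`, and each condition is a
nonzero multiple of `t² - (2n - 1)`; as `t > 0`, `t² = 2n - 1` is the same as `t = √(2n - 1)`. -/

open Real

lemma Real.tan_two_mul_pos {r : ℝ} (hr0 : 0 < r) (hr1 : r < π / 4) : 0 < tan (2 * r) :=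
  tan_pos_of_pos_of_lt_pi_div_two (by linarith) (by linarith)

section TypeBConditions

variable {t N α k β h : ℝ}

lemma typeB_condition_Tβ_eq (ht : t ≠ 0) (hα : α = -2 * t) (hβ : β = 2 / t)
    (hh : h = α + (4 * N - 1) * β) :
    4 - h * β + β ^ 2 = 8 * (t ^ 2 - (2 * N - 1)) / t ^ 2 := by
  subst hα hβ hh
  field_simp
  ring

lemma typeB_condition_Tγ_eq (ht : t ≠ 0) (hα : α = -2 * t) (hk : k = α / 2) (hβ : β = 2 / t)
    (hh : h = α + (4 * N - 1) * β) :
    4 * k + (h - β) * (4 + k * β) = -8 * (t ^ 2 - (2 * N - 1)) / t := by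
  subst hα hk hβ hh
  field_simp
  ring

lemma typeB_condition_Tβ_iff (ht : t ≠ 0) (hα : α = -2 * t) (hβ : β = 2 / t)
    (hh : h = α + (4 * N - 1) * β) :
    4 - h * β + β ^ 2 = 0 ↔ t ^ 2 = 2 * N - 1 := by
  rw [typeB_condition_Tβ_eq ht hα hβ hh, div_eq_zero_iff, mul_eq_zero, sub_eq_zero]
  simp [ht]

lemma typeB_condition_Tγ_iff (ht : t ≠ 0) (hα : α = -2 * t) (hk : k = α / 2) (hβ : β = 2 / t)
    (hh : h = α + (4 * N - 1) * β) :
    4 * k + (h - β) * (4 + k * β) = 0 ↔ t ^ 2 = 2 * N - 1 := by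
  rw [typeB_condition_Tγ_eq ht hα hk hβ hh, div_eq_zero_iff, mul_eq_zero, sub_eq_zero]
  simp [ht]

end TypeBConditions

theorem typeB_GTW_Reeb_parallel_radius_general (n : ℕ)
    (r : ℝ) (hr0 : 0 < r) (hr1 : r < Real.pi / 4)
    (α k β h : ℝ)
    (hα : α = -2 * Real.tan (2 * r))
    (hk : k = α / 2)
    (hβ : β = 2 * Real.cot (2 * r))
    (hh : h = α + (4 * (n : ℝ) - 1) * β) :
    (4 - h * β + β ^ 2 = 0 ∧ 4 * k + (h - β) * (4 + k * β) = 0) ↔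
      Real.tan (2 * r) = Real.sqrt (2 * (n : ℝ) - 1) := by
  have ht : 0 < tan (2 * r) := tan_two_mul_pos hr0 hr1
  have hβ' : β = 2 / tan (2 * r) := by rw [hβ, ← tan_inv_eq_cot, div_eq_mul_inv]
  rw [typeB_condition_Tβ_iff ht.ne' hα hβ' hh, typeB_condition_Tγ_iff ht.ne' hα hk hβ' hh,
    and_self, eq_comm (a := tan (2 * r)), sqrt_eq_iff_mul_self_eq_of_pos ht, sq]

/-- For a Type (B) tube of radius `r ∈ (0, π/4)` with `k = α/2`, the two
GTW-Reeb parallelism conditions on `T_β` and `T_γ` hold iff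
`tan(2r) = √(2n−1)`. -/
theorem typeB_GTW_Reeb_parallel_radius (n : ℕ) (hn : 2 ≤ n)
    (r : ℝ) (hr0 : 0 < r) (hr1 : r < Real.pi / 4)
    (α k β h : ℝ)
    (hα : α = -2 * Real.tan (2 * r))
    (hk : k = α / 2)
    (hβ : β = 2 * Real.cot (2 * r))
    (hh : h = α + (4 * (n : ℝ) - 1) * β) :
    (4 - h * β + β ^ 2 = 0 ∧ 4 * k + (h - β) * (4 + k * β) = 0) ↔
      Real.tan (2 * r) = Real.sqrt (2 * (n : ℝ) - 1) :=
  typeB_GTW_Reeb_parallel_radius_general n r hr0 hr1 α k β h hα hk hβ hh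
end

section
/- Let n ≥ 2 be an integer. There is no real number r with 0 < r < π/4 such that, setting α = −2·tan(2r), β = 2·cot(2r), λ = cot r and h = α + (4n−1)β, both (h − β)(α·λ + 2) = 0 and α + h − β = 0 hold. -/
/-- No Type (B) tube satisfies the two Reeb-parallelism conditions of
Theorem 2 simultaneously. -/
theorem typeB_no_Reeb_parallel (n : ℕ) (hn : 2 ≤ n) :
    ¬ ∃ r : ℝ, 0 < r ∧ r < Real.pi / 4 ∧
      (let α := -2 * Real.tan (2 * r)
       let β := 2 * Real.cot (2 * r)
       let lam := Real.cot r
       let h := α + (4 * (n : ℝ) - 1) * β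
       (h - β) * (α * lam + 2) = 0 ∧ α + h - β = 0) := by
  rintro ⟨r, hr0, hr4, h1, h2⟩
  have hpi := Real.pi_pos
  have h2r0 : 0 < 2 * r := by linarith
  have h2r : 2 * r < Real.pi / 2 := by linarith
  have hrpi2 : r < Real.pi / 2 := by linarith
  have hsin2 : 0 < Real.sin (2 * r) :=
    Real.sin_pos_of_pos_of_lt_pi h2r0 (by linarith)
  have hcos2 : 0 < Real.cos (2 * r) :=
    Real.cos_pos_of_mem_Ioo ⟨by linarith, h2r⟩
  have hsinr : 0 < Real.sin r := Real.sin_pos_of_pos_of_lt_pi hr0 (by linarith)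
  have hcosr : 0 < Real.cos r := Real.cos_pos_of_mem_Ioo ⟨by linarith, hrpi2⟩
  have htan2 : 0 < Real.tan (2 * r) := Real.tan_pos_of_pos_of_lt_pi_div_two h2r0 h2r
  have htan2eq : Real.tan (2 * r) = Real.sin (2 * r) / Real.cos (2 * r) := Real.tan_eq_sin_div_cos _
  have hcotr : Real.cot r = Real.cos r / Real.sin r := Real.cot_eq_cos_div_sin _
  -- key: α * lam + 2 = -2 / cos (2r) < 0
  have hsin2eq : Real.sin (2 * r) = 2 * Real.sin r * Real.cos r := Real.sin_two_mul r
  have hcos2eq : Real.cos (2 * r) = 2 * Real.cos r ^ 2 - 1 := Real.cos_two_mul r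
  have hkey : -2 * Real.tan (2 * r) * Real.cot r + 2 = -2 / Real.cos (2 * r) := by
    have h2c : 2 * Real.cos r ^ 2 - 1 ≠ 0 := by
      rw [← hcos2eq]; exact hcos2.ne'
    rw [htan2eq, hcotr, hsin2eq, hcos2eq]
    field_simp
    ring
  have hkeyneg : -2 * Real.tan (2 * r) * Real.cot r + 2 < 0 := by
    rw [hkey]
    exact div_neg_of_neg_of_pos (by norm_num) hcos2
  -- from h1 : h = β
  have hhb : -2 * Real.tan (2 * r) + (4 * (n : ℝ) - 1) * (2 * Real.cot (2 * r)) -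
      2 * Real.cot (2 * r) = 0 := by
    rcases mul_eq_zero.1 h1 with h | h
    · linarith
    · linarith
  -- then h2 gives α = 0
  have : -2 * Real.tan (2 * r) = 0 := by linarith
  linarith
end

section
/- Let m ≥ 3 be an integer and r a real number with 0 < r < π/(2√2). Put α = 2√2·cot(2√2·r), β = √2·cot(√2·r), λ = −√2·tan(√2·r), h = α + 2β + (2m−2)λ, δ = 4m + h·α − α², σ = 4m + 6 + h·β − β², and τ = 4m + 6 + h·λ − λ². Then it is impossible that both δ = σ and τ = δ hold. -/
/-!
Write `t = √2 r ∈ (0, π/2)`. The double-angle formula `2 cot 2t = cot t - tan t` gives `α = β + λ`,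
and `cot t · tan t = 1` gives `βλ = -2`. With these, `δ = σ` becomes `hλ - λ² = 2` and `τ = δ`
becomes `hβ - β² = 2`. Subtracting, `(λ - β)(h - λ - β) = 0`; since `βλ < 0` forces `λ ≠ β`, we get
`h = β + λ`, and then `hλ - λ² = βλ = -2 ≠ 2`.
-/

open Real

lemma Real.cot_mul_tan {t : ℝ} (hsin : sin t ≠ 0) (hcos : cos t ≠ 0) : cot t * tan t = 1 := by
  rw [cot_eq_cos_div_sin, tan_eq_sin_div_cos]
  field_simp

lemma Real.two_mul_cot_two_mul {t : ℝ} (hsin : sin t ≠ 0) (hcos : cos t ≠ 0) :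
    2 * cot (2 * t) = cot t - tan t := by
  rw [cot_eq_cos_div_sin, cot_eq_cos_div_sin, tan_eq_sin_div_cos, cos_two_mul, sin_two_mul]
  field_simp
  linear_combination sin_sq_add_cos_sq t

lemma not_mul_sub_sq_eq_two_and_eq_two {β lam h : ℝ} (hβlam : β * lam = -2) :
    ¬ (h * lam - lam ^ 2 = 2 ∧ h * β - β ^ 2 = 2) := by
  rintro ⟨hlam, hβ⟩
  have hne : lam - β ≠ 0 := by
    intro heq
    nlinarith [sq_nonneg β, show lam = β by linarith]
  have hfac : (lam - β) * (h - lam - β) = 0 := by linear_combination hlam - hβ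
  have hh : h = β + lam := by linarith [(mul_eq_zero.mp hfac).resolve_left hne]
  rw [hh] at hlam
  linarith

theorem typeA_no_coinciding_Ricci_eigenvalues_general (m : ℕ)
    (r : ℝ) (hr0 : 0 < r) (hr1 : r < Real.pi / (2 * Real.sqrt 2))
    (α β lam h δ σ τ : ℝ)
    (hα : α = 2 * Real.sqrt 2 * Real.cot (2 * Real.sqrt 2 * r))
    (hβ : β = Real.sqrt 2 * Real.cot (Real.sqrt 2 * r))
    (hlam : lam = -(Real.sqrt 2) * Real.tan (Real.sqrt 2 * r))
    (hδ : δ = 4 * (m : ℝ) + h * α - α ^ 2)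
    (hσ : σ = 4 * (m : ℝ) + 6 + h * β - β ^ 2)
    (hτ : τ = 4 * (m : ℝ) + 6 + h * lam - lam ^ 2) :
    ¬ (δ = σ ∧ τ = δ) := by
  set t := √2 * r
  have hsqrt : (0 : ℝ) < √2 := by positivity
  have ht0 : 0 < t := mul_pos hsqrt hr0
  have ht1 : t < π / 2 := by
    calc t < √2 * (π / (2 * √2)) := mul_lt_mul_of_pos_left hr1 hsqrt
      _ = π / 2 := by field_simp
  have hsin : sin t ≠ 0 := (sin_pos_of_pos_of_lt_pi ht0 (by linarith [pi_pos])).ne'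
  have hcos : cos t ≠ 0 := (cos_pos_of_mem_Ioo ⟨by linarith [pi_pos], ht1⟩).ne'
  have hβlam : β * lam = -2 := by
    rw [hβ, hlam]
    linear_combination -(√2 * √2) * cot_mul_tan hsin hcos - mul_self_sqrt zero_le_two
  have hαβlam : α = β + lam := by
    rw [hα, hβ, hlam, show 2 * √2 * r = 2 * t by ring]
    linear_combination √2 * two_mul_cot_two_mul hsin hcos
  rintro ⟨hδσ, hτδ⟩
  subst hδ hσ hτ hαβlam
  exact not_mul_sub_sq_eq_two_and_eq_two (h := h) hβlam
    ⟨by linear_combination hδσ + 2 * hβlam, by linear_combination -hτδ + 2 * hβlam⟩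

/-- Computational content of Corollary 2: for a Type (A) tube the Ricci
eigenvalue conditions `δ = σ` and `τ = δ` cannot both hold. -/
theorem typeA_no_coinciding_Ricci_eigenvalues (m : ℕ) (hm : 3 ≤ m)
    (r : ℝ) (hr0 : 0 < r) (hr1 : r < Real.pi / (2 * Real.sqrt 2))
    (α β lam h δ σ τ : ℝ)
    (hα : α = 2 * Real.sqrt 2 * Real.cot (2 * Real.sqrt 2 * r))
    (hβ : β = Real.sqrt 2 * Real.cot (Real.sqrt 2 * r))
    (hlam : lam = -(Real.sqrt 2) * Real.tan (Real.sqrt 2 * r))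
    (hh : h = α + 2 * β + (2 * (m : ℝ) - 2) * lam)
    (hδ : δ = 4 * (m : ℝ) + h * α - α ^ 2)
    (hσ : σ = 4 * (m : ℝ) + 6 + h * β - β ^ 2)
    (hτ : τ = 4 * (m : ℝ) + 6 + h * lam - lam ^ 2) :
    ¬ (δ = σ ∧ τ = δ) :=
  typeA_no_coinciding_Ricci_eigenvalues_general m r hr0 hr1 α β lam h δ σ τ hα hβ hlam hδ hσ hτ
end
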